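/- arXiv:1511.05541 — 2 statements merged into one kernel-verified Lean document; each statement's English description precedes it below -/
import Mathlib

section
/- Conversely, if y₁, …, yₙ are elements of a differential field (K, δ) of characteristic zero whose Wronskian vanishes, then y₁, …, yₙ are linearly dependent over the field of constants C of K. -/
/-!
Induct on `n`. If the Wronskian of `y₁, …, yₙ₋₁` already vanishes, a relation among them is a
relation among `y₁, …, yₙ`. Otherwise the vanishing Wronskian gives a nonzero kernel vector `c`
with `∑ cⱼ yⱼ⁽ⁱ⁾ = 0` for `i < n`; here `cₙ ≠ 0`, since otherwise the smaller Wronskian would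
have a kernel, so `c` can be normalized to `cₙ = 1`. Differentiating the `i`-th relation and
subtracting the `(i+1)`-st shows that `δ c` satisfies the first `n - 1` relations, and `δ cₙ = 0`,
so invertibility of the smaller Wronskian forces `δ c = 0`.
-/

open Matrix

/-- The first `k` rows of the Wronskian matrix, so that the relations `∑ⱼ f^[i] (y j) * c j = 0`
for `i < k` read `wronskianMatrix f k y *ᵥ c = 0`. -/
def wronskianMatrix {A ι : Type*} (f : A → A) (k : ℕ) (y : ι → A) : Matrix (Fin k) ι A :=
  Matrix.of fun i j => f^[i] (y j)

section

variable {A ι : Type*} [CommRing A] [Fintype ι]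

theorem wronskianMatrix_mulVec_apply (f : A → A) (k : ℕ) (y v : ι → A) (i : Fin k) :
    (wronskianMatrix f k y *ᵥ v) i = ∑ j, f^[i] (y j) * v j :=
  rfl

theorem wronskianMatrix_mulVec_eq_zero_of_le {f : A → A} {k l : ℕ} (hkl : k ≤ l) {y v : ι → A}
    (h : wronskianMatrix f l y *ᵥ v = 0) : wronskianMatrix f k y *ᵥ v = 0 := by
  funext i
  simpa only [wronskianMatrix_mulVec_apply, Fin.val_castLE, Pi.zero_apply]
    using congrFun h (Fin.castLE hkl i)

theorem wronskianMatrix_mulVec_castSucc {m : ℕ} (f : A → A) (k : ℕ) (y v : Fin (m + 1) → A)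
    (hv : v (Fin.last m) = 0) :
    wronskianMatrix f k y *ᵥ v = wronskianMatrix f k (y ∘ Fin.castSucc) *ᵥ (v ∘ Fin.castSucc) := by
  funext i
  simp [wronskianMatrix_mulVec_apply, Fin.sum_univ_castSucc, hv]

theorem Derivation.wronskianMatrix_mulVec_map_eq_zero {R : Type*} [CommRing R] [Algebra R A]
    (D : Derivation R A A) {k : ℕ} {y c : ι → A} (h : wronskianMatrix D (k + 1) y *ᵥ c = 0) :
    wronskianMatrix D k y *ᵥ (D ∘ c) = 0 := by
  funext i
  have hi := congrArg D (congrFun h i.castSucc)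
  have hi' := congrFun h i.succ
  simp only [wronskianMatrix_mulVec_apply, Fin.val_castSucc, Fin.val_succ, map_sum,
    Derivation.leibniz, smul_eq_mul, Finset.sum_add_distrib, Function.iterate_succ_apply',
    Pi.zero_apply, map_zero, mul_comm (c _)] at hi hi' ⊢
  rwa [hi', add_zero] at hi

end

section

variable {R K : Type*} [CommRing R] [Field K] [Algebra R K] (D : Derivation R K K)

theorem Derivation.exists_constant_relation_of_det_wronskianMatrix_castSucc_ne_zero {m : ℕ}
    {y : Fin (m + 1) → K} (hW : (wronskianMatrix D (m + 1) y).det = 0)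
    (hW' : (wronskianMatrix D m (y ∘ Fin.castSucc)).det ≠ 0) :
    ∃ c : Fin (m + 1) → K, (∀ i, D (c i) = 0) ∧ c ≠ 0 ∧ ∑ i, c i * y i = 0 := by
  have eq_zero_of_last_eq_zero : ∀ w : Fin (m + 1) → K, w (Fin.last m) = 0 →
      wronskianMatrix D m y *ᵥ w = 0 → w = 0 := by
    intro w hlast hw
    rw [wronskianMatrix_mulVec_castSucc _ _ _ _ hlast] at hw
    have hw' := eq_zero_of_mulVec_eq_zero hW' hw
    funext j
    induction j using Fin.lastCases with
    | last => exact hlast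
    | cast j => exact congrFun hw' j
  obtain ⟨v, hv0, hv⟩ := exists_mulVec_eq_zero_iff.mpr hW
  have hvlast : v (Fin.last m) ≠ 0 := fun hlast =>
    hv0 (eq_zero_of_last_eq_zero v hlast (wronskianMatrix_mulVec_eq_zero_of_le m.le_succ hv))
  set c := (v (Fin.last m))⁻¹ • v
  have hc : wronskianMatrix D (m + 1) y *ᵥ c = 0 := by rw [mulVec_smul, hv, smul_zero]
  have hclast : c (Fin.last m) = 1 := inv_mul_cancel₀ hvlast
  have hDc : D ∘ c = 0 := by
    refine eq_zero_of_last_eq_zero _ ?_ (D.wronskianMatrix_mulVec_map_eq_zero hc)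
    simp [hclast]
  refine ⟨c, fun i => congrFun hDc i, fun h => by simpa [hclast] using congrFun h (Fin.last m), ?_⟩
  simpa [wronskianMatrix_mulVec_apply, mul_comm] using congrFun hc 0

theorem Derivation.exists_constant_relation_of_det_wronskianMatrix_eq_zero {n : ℕ}
    {y : Fin n → K} (hW : (wronskianMatrix D n y).det = 0) :
    ∃ c : Fin n → K, (∀ i, D (c i) = 0) ∧ c ≠ 0 ∧ ∑ i, c i * y i = 0 := by
  induction n with
  | zero => simp at hW
  | succ m ih =>
    by_cases hW' : (wronskianMatrix D m (y ∘ Fin.castSucc)).det = 0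
    · obtain ⟨c, hDc, hc0, hcy⟩ := ih hW'
      refine ⟨Fin.snoc c 0, fun i => ?_, fun h => hc0 ?_, ?_⟩
      · induction i using Fin.lastCases with
        | last => simp
        | cast j => simpa using hDc j
      · funext j
        simpa using congrFun h j.castSucc
      · simpa [Fin.sum_univ_castSucc] using hcy
    · exact D.exists_constant_relation_of_det_wronskianMatrix_castSucc_ne_zero hW hW'

end

theorem linearDependent_over_constants_of_wronskian_eq_zero_general
    (K : Type*) [Field K] (δ : K → K)
    (hadd : ∀ a b, δ (a + b) = δ a + δ b)
    (hmul : ∀ a b, δ (a * b) = a * δ b + b * δ a)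
    (n : ℕ) (y : Fin n → K)
    (hW : Matrix.det (Matrix.of fun i j : Fin n => δ^[(i : ℕ)] (y j)) = 0) :
    ∃ c : Fin n → K, (∀ i, δ (c i) = 0) ∧ c ≠ 0 ∧ ∑ i, c i * y i = 0 :=
  let D : Derivation ℤ K K := Derivation.mk' (AddMonoidHom.mk' δ hadd).toIntLinearMap hmul
  D.exists_constant_relation_of_det_wronskianMatrix_eq_zero hW

/-- If the Wronskian of `y₁, …, yₙ` in a differential field of characteristic zero
vanishes, then `y₁, …, yₙ` are linearly dependent over the field of constants. -/
theorem linearDependent_over_constants_of_wronskian_eq_zero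
    (K : Type*) [Field K] [CharZero K] (δ : K → K)
    (hadd : ∀ a b, δ (a + b) = δ a + δ b)
    (hmul : ∀ a b, δ (a * b) = a * δ b + b * δ a)
    (n : ℕ) (y : Fin n → K)
    (hW : Matrix.det (Matrix.of fun i j : Fin n => δ^[(i : ℕ)] (y j)) = 0) :
    ∃ c : Fin n → K, (∀ i, δ (c i) = 0) ∧ c ≠ 0 ∧ ∑ i, c i * y i = 0 :=
  linearDependent_over_constants_of_wronskian_eq_zero_general K δ hadd hmul n y hW
end

section
/- Let (U, δ) be a differential field of characteristic zero with constants C, let K ⊆ U be a differential subfield, and let E be an intermediate field with K ⊆ E ⊆ K(C) that is closed under δ. Then E is generated over K by its own constants: E = K(E ∩ C). -/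
/-!
Write `F = K(E ∩ C)`. Every `x ∈ E ⊆ F(C)` satisfies `x * q = p` with `p = ∑ aᵢ dᵢ`, `q = ∑ bᵢ dᵢ`
nonzero, `aᵢ, bᵢ ∈ F` and constants `dᵢ`. The coefficients `x bᵢ - aᵢ ∈ E` form a relation
among the `dᵢ`. A relation with coefficients in the differential field `E` can be replaced by one
with constant coefficients: normalize one coefficient to `1` and differentiate, which kills that
coefficient, and repeat until the derivative vanishes. A relation with coefficients in `E ∩ C ⊆ F`
eliminates one `dᵢ` from `p` and `q`, so by induction we reach `x bᵢ = aᵢ` for all `i`, and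
`x = aᵢ / bᵢ ∈ F`.
-/

open Finset Submodule

theorem Finset.sum_erase_sub_div_mul_eq_sum {ι K : Type*} [DecidableEq ι] [Field K]
    {s : Finset ι} {c d : ι → K}
    (hc : ∑ i ∈ s, c i * d i = 0) {l : ι} (hcl : c l ≠ 0) (u : ι → K) :
    ∑ i ∈ s.erase l, (u i - u l / c l * c i) * d i = ∑ i ∈ s, u i * d i := by
  rw [Finset.sum_erase _ (by simp [hcl])]
  simp only [sub_mul, sum_sub_distrib, mul_assoc, ← mul_sum, hc, mul_zero, sub_zero]

theorem Subfield.exists_mul_eq_of_mem_closure_union {U : Type*} [Field U] (K : Subfield U)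
    (S : Submonoid U) {x : U} (hx : x ∈ closure ((K : Set U) ∪ S)) :
    ∃ p ∈ span K (S : Set U), ∃ q ∈ span K (S : Set U), q ≠ 0 ∧ x * q = p := by
  have hclosure : Subring.closure ((K : Set U) ∪ S) ≤ (Algebra.adjoin K (S : Set U)).toSubring :=
    Subring.closure_le.mpr <| Set.union_subset
      (fun k hk ↦ Subalgebra.algebraMap_mem _ (⟨k, hk⟩ : K)) Algebra.subset_adjoin
  have hspan : ∀ y ∈ Algebra.adjoin K (S : Set U), y ∈ span K (S : Set U) := by
    intro y hy
    rwa [← Subalgebra.mem_toSubmodule, Algebra.adjoin_eq_span, Submonoid.closure_eq] at hy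
  obtain ⟨y, hy, z, hz, rfl⟩ := mem_closure_iff.mp hx
  rcases eq_or_ne z 0 with rfl | hz0
  · exact ⟨0, zero_mem _, 1, subset_span S.one_mem, one_ne_zero, by simp⟩
  · exact ⟨y, hspan _ (hclosure hy), z, hspan _ (hclosure hz), hz0, div_mul_cancel₀ y hz0⟩

namespace Derivation

variable {R U : Type*} [CommRing R] [Field U] [Algebra R U] (D : Derivation R U U)

def constants : Subfield U where
  carrier := {x | D x = 0}
  zero_mem' := D.map_zero
  one_mem' := D.map_one_eq_zero
  add_mem' := by intros; simp_all
  mul_mem' := by intros; simp_all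
  neg_mem' := by intros; simp_all
  inv_mem' := by intros; simp_all [leibniz_inv]

variable {D}

theorem map_sum_mul_constants {ι : Type*} {s : Finset ι} {d : ι → U}
    (hd : ∀ i ∈ s, D (d i) = 0) (f : ι → U) :
    D (∑ i ∈ s, f i * d i) = ∑ i ∈ s, D (f i) * d i := by
  rw [map_sum]
  refine sum_congr rfl fun i hi ↦ ?_
  rw [leibniz, hd i hi, smul_zero, zero_add, smul_eq_mul, mul_comm]

variable {E : Subfield U} {ι : Type*} {s : Finset ι} {d : ι → U}

theorem exists_constant_relation (hE : ∀ x ∈ E, D x ∈ E) (hd : ∀ i ∈ s, D (d i) = 0)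
    {g : ι → U} (hg : ∀ i ∈ s, g i ∈ E) (hsum : ∑ i ∈ s, g i * d i = 0)
    (hne : ∃ i ∈ s, g i ≠ 0) :
    ∃ c : ι → U, (∀ i ∈ s, c i ∈ E ⊓ D.constants) ∧ ∑ i ∈ s, c i * d i = 0 ∧
      ∃ i ∈ s, c i ≠ 0 := by
  classical
  induction hn : #{i ∈ s | g i ≠ 0} using Nat.strong_induction_on generalizing g with
  | _ n ih =>
  obtain ⟨l, hl, hgl⟩ := hne
  set h : ι → U := fun i ↦ g i / g l
  have hhE : ∀ i ∈ s, h i ∈ E := fun i hi ↦ div_mem (hg i hi) (hg l hl)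
  have hhsum : ∑ i ∈ s, h i * d i = 0 := by
    simp only [h, div_mul_eq_mul_div, ← sum_div, hsum, zero_div]
  have hhl : h l = 1 := div_self hgl
  by_cases hδ : ∃ i ∈ s, D (h i) ≠ 0
  · have hsupp : {i ∈ s | D (h i) ≠ 0} ⊆ {i ∈ s | g i ≠ 0}.erase l := by
      intro i hi
      simp only [mem_erase, mem_filter] at hi ⊢
      refine ⟨?_, hi.1, fun hgi ↦ hi.2 ?_⟩
      · rintro rfl; exact hi.2 (by rw [hhl, map_one_eq_zero])
      · simp [h, hgi]
    refine ih _ ?_ (fun i hi ↦ hE _ (hhE i hi)) ?_ hδ rfl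
    · exact hn ▸ (card_le_card hsupp).trans_lt (card_erase_lt_of_mem (by simp [hl, hgl]))
    · rw [← map_sum_mul_constants hd, hhsum, map_zero]
  · push Not at hδ
    exact ⟨h, fun i hi ↦ ⟨hhE i hi, hδ i hi⟩, hhsum, l, hl, by simp [hhl]⟩

theorem mem_of_mul_sum_eq_sum {F : Subfield U} (hE : ∀ x ∈ E, D x ∈ E) (hFE : F ≤ E)
    (hF : E ⊓ D.constants ≤ F) {x : U} (hx : x ∈ E) (hd : ∀ i ∈ s, D (d i) = 0)
    {a b : ι → U} (ha : ∀ i ∈ s, a i ∈ F) (hb : ∀ i ∈ s, b i ∈ F)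
    (heq : x * ∑ i ∈ s, b i * d i = ∑ i ∈ s, a i * d i) (hne : ∑ i ∈ s, b i * d i ≠ 0) :
    x ∈ F := by
  classical
  induction s using Finset.strongInduction generalizing a b with
  | _ s ih =>
  set g : ι → U := fun i ↦ x * b i - a i
  have hgsum : ∑ i ∈ s, g i * d i = 0 := by
    simp only [g, sub_mul, sum_sub_distrib, mul_assoc, ← mul_sum, heq, sub_self]
  by_cases hg : ∃ i ∈ s, g i ≠ 0
  · obtain ⟨c, hc, hcsum, l, hl, hcl⟩ := exists_constant_relation hE hd
      (fun i hi ↦ sub_mem (mul_mem hx (hFE (hb i hi))) (hFE (ha i hi))) hgsum hg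
    have hcF : ∀ i ∈ s, c i ∈ F := fun i hi ↦ hF (hc i hi)
    have elim := sum_erase_sub_div_mul_eq_sum hcsum hcl
    refine ih (s.erase l) (erase_ssubset hl) (fun i hi ↦ hd i (mem_of_mem_erase hi))
      (a := fun i ↦ a i - a l / c l * c i) (b := fun i ↦ b i - b l / c l * c i)
      (fun i hi ↦ ?_) (fun i hi ↦ ?_) (by rw [elim, elim, heq]) (by rwa [elim])
    · replace hi := mem_of_mem_erase hi
      exact sub_mem (ha i hi) (mul_mem (div_mem (ha l hl) (hcF l hl)) (hcF i hi))
    · replace hi := mem_of_mem_erase hi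
      exact sub_mem (hb i hi) (mul_mem (div_mem (hb l hl) (hcF l hl)) (hcF i hi))
  · push Not at hg
    obtain ⟨i, hi, hbd⟩ := exists_ne_zero_of_sum_ne_zero hne
    have hbi : b i ≠ 0 := left_ne_zero_of_mul hbd
    rw [eq_div_of_mul_eq hbi (sub_eq_zero.mp (hg i hi))]
    exact div_mem (ha i hi) (hb i hi)

theorem mem_of_mul_mem_span_eq {F : Subfield U} (hE : ∀ x ∈ E, D x ∈ E) (hFE : F ≤ E)
    (hF : E ⊓ D.constants ≤ F) {x p q : U} (hx : x ∈ E) (hp : p ∈ span F (D.constants : Set U))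
    (hq : q ∈ span F (D.constants : Set U)) (hq0 : q ≠ 0) (hxq : x * q = p) : x ∈ F := by
  classical
  obtain ⟨Tp, hTp, hp⟩ := mem_span_finite_of_mem_span hp
  obtain ⟨Tq, hTq, hq⟩ := mem_span_finite_of_mem_span hq
  obtain ⟨a, -, rfl⟩ := mem_span_finset.mp (span_mono (by simp) hp : p ∈ span F ↑(Tp ∪ Tq))
  obtain ⟨b, -, rfl⟩ := mem_span_finset.mp (span_mono (by simp) hq : q ∈ span F ↑(Tp ∪ Tq))
  have hconst : ∀ c ∈ Tp ∪ Tq, D c = 0 := fun c hc ↦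
    (mem_union.mp hc).elim (fun h ↦ hTp h) (fun h ↦ hTq h)
  exact mem_of_mul_sum_eq_sum hE hFE hF hx hconst (fun i _ ↦ (a i).2) (fun i _ ↦ (b i).2) hxq hq0

end Derivation

theorem intermediate_field_generated_by_its_constants_general
    (U : Type*) [Field U] (δ : U → U)
    (hadd : ∀ a b, δ (a + b) = δ a + δ b)
    (hmul : ∀ a b, δ (a * b) = a * δ b + b * δ a)
    (K E : Subfield U)
    (hEδ : ∀ x ∈ E, δ x ∈ E)
    (hKE : K ≤ E)
    (hE : E ≤ Subfield.closure ((K : Set U) ∪ {x : U | δ x = 0})) :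
    E = Subfield.closure ((K : Set U) ∪ ((E : Set U) ∩ {x : U | δ x = 0})) := by
  let D : Derivation ℤ U U := .mk' (AddMonoidHom.mk' δ hadd).toIntLinearMap hmul
  set F := Subfield.closure ((K : Set U) ∪ ((E : Set U) ∩ {x : U | δ x = 0}))
  have hFE : F ≤ E := Subfield.closure_le.mpr (Set.union_subset hKE Set.inter_subset_left)
  have hF : E ⊓ D.constants ≤ F := fun x hx ↦ Subfield.subset_closure (Or.inr hx)
  refine le_antisymm (fun x hx ↦ ?_) hFE
  have hxFC : x ∈ Subfield.closure ((F : Set U) ∪ D.constants.toSubmonoid) :=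
    Subfield.closure_mono (Set.union_subset_union_left _ fun k hk ↦
      Subfield.subset_closure (Or.inl hk)) (hE hx)
  obtain ⟨p, hp, q, hq, hq0, hxq⟩ := F.exists_mul_eq_of_mem_closure_union _ hxFC
  exact Derivation.mem_of_mul_mem_span_eq hEδ hFE hF hx hp hq hq0 hxq

/-- If `E` is a differential intermediate field with `K ⊆ E ⊆ K(C)`, where `C` is the
set of constants of the ambient differential field, then `E` is generated over `K`
by its own constants: `E = K(E ∩ C)`. -/
theorem intermediate_field_generated_by_its_constants
    (U : Type*) [Field U] [CharZero U] (δ : U → U)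
    (hadd : ∀ a b, δ (a + b) = δ a + δ b)
    (hmul : ∀ a b, δ (a * b) = a * δ b + b * δ a)
    (K E : Subfield U)
    (hK : ∀ x ∈ K, δ x ∈ K)
    (hEδ : ∀ x ∈ E, δ x ∈ E)
    (hKE : K ≤ E)
    (hE : E ≤ Subfield.closure ((K : Set U) ∪ {x : U | δ x = 0})) :
    E = Subfield.closure ((K : Set U) ∪ ((E : Set U) ∩ {x : U | δ x = 0})) :=
  intermediate_field_generated_by_its_constants_general U δ hadd hmul K E hEδ hKE hE
end
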